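/- arXiv:2411.03096 — 3 statements merged into one kernel-verified Lean document; each statement's English description precedes it below -/
import Mathlib

section
/- Let M be an n × m real matrix written in block form M = [[A, B], [C, D]] with A ∈ ℝ^{r×r} invertible, and suppose rank(M) > r. Then there exist indices i > r and j > r such that the (r+1) × (r+1) submatrix of M with rows {1,…,r, i} and columns {1,…,r, j} is invertible. -/
open Matrix

private theorem det_snoc_aux (n m r : ℕ) (hr : r ≤ n) (hr' : r ≤ m)
    (M : Matrix (Fin n) (Fin m) ℝ)
    (hA : IsUnit (M.submatrix (Fin.castLE hr) (Fin.castLE hr')).det)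
    (i : Fin n) (j : Fin m) :
    (M.submatrix (Fin.snoc (Fin.castLE hr) i) (Fin.snoc (Fin.castLE hr') j)).det
      = (M.submatrix (Fin.castLE hr) (Fin.castLE hr')).det *
        (M i j - ((M.submatrix id (Fin.castLE hr') *
            (M.submatrix (Fin.castLE hr) (Fin.castLE hr'))⁻¹) *
            M.submatrix (Fin.castLE hr) id) i j) := by
  set A := M.submatrix (Fin.castLE hr) (Fin.castLE hr') with hAdef
  haveI : Invertible A := A.invertibleOfIsUnitDet hA
  set b : Matrix (Fin r) (Fin 1) ℝ := Matrix.of fun k _ => M (Fin.castLE hr k) j with hb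
  set c : Matrix (Fin 1) (Fin r) ℝ := Matrix.of fun _ l => M i (Fin.castLE hr' l) with hc
  set d : Matrix (Fin 1) (Fin 1) ℝ := Matrix.of fun _ _ => M i j with hd
  set N := M.submatrix (Fin.snoc (Fin.castLE hr) i) (Fin.snoc (Fin.castLE hr') j) with hNdef
  have e : Fin r ⊕ Fin 1 ≃ Fin (r + 1) := finSumFinEquiv
  have hsnoc1 : ∀ k : Fin r, Fin.snoc (α := fun _ => Fin n) (Fin.castLE hr) i
      (Fin.castAdd 1 k) = Fin.castLE hr k := fun k => Fin.snoc_castSucc _ _ _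
  have hsnoc2 : ∀ k : Fin r, Fin.snoc (α := fun _ => Fin m) (Fin.castLE hr') j
      (Fin.castAdd 1 k) = Fin.castLE hr' k := fun k => Fin.snoc_castSucc _ _ _
  have hnat : ∀ x : Fin 1, Fin.natAdd r x = Fin.last r := by
    intro x
    have : (x : ℕ) = 0 := by omega
    ext; simp [this]
  have hN : N.submatrix finSumFinEquiv finSumFinEquiv = fromBlocks A b c d := by
    ext a b'
    rcases a with a | a <;> rcases b' with b' | b' <;>
      simp [hNdef, hAdef, hb, hc, hd, fromBlocks, finSumFinEquiv_apply_left,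
        finSumFinEquiv_apply_right, hsnoc1, hsnoc2, hnat, Fin.snoc_last]
  have h1 : N.det = (N.submatrix finSumFinEquiv finSumFinEquiv).det :=
    (det_submatrix_equiv_self _ _).symm
  rw [h1, hN, det_fromBlocks₁₁, invOf_eq_nonsing_inv, det_fin_one]
  congr 1

/-- Let `M` be an `n × m` real matrix whose top-left `r × r` block is
invertible and whose rank exceeds `r`. Then there are a row `i > r` and a column `j > r`
such that the `(r+1) × (r+1)` submatrix on rows `{1,…,r,i}` and columns `{1,…,r,j}` is
invertible. -/
theorem exists_invertible_extended_submatrix (n m r : ℕ) (hr : r ≤ n) (hr' : r ≤ m)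
    (M : Matrix (Fin n) (Fin m) ℝ)
    (hA : IsUnit (M.submatrix (Fin.castLE hr) (Fin.castLE hr')).det)
    (hrank : r < M.rank) :
    ∃ i : Fin n, ∃ j : Fin m, r ≤ (i : ℕ) ∧ r ≤ (j : ℕ) ∧
      IsUnit (M.submatrix (Fin.snoc (Fin.castLE hr) i) (Fin.snoc (Fin.castLE hr') j)).det := by
  by_contra hcon
  push_neg at hcon
  set A := M.submatrix (Fin.castLE hr) (Fin.castLE hr') with hAdef
  set L := M.submatrix id (Fin.castLE hr') with hL
  set T := M.submatrix (Fin.castLE hr) id with hT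
  have hdetA : A.det ≠ 0 := hA.ne_zero
  have key : M = (L * A⁻¹) * T := by
    ext x y
    by_cases hx : (x : ℕ) < r
    · obtain ⟨x', rfl⟩ : ∃ x', x = Fin.castLE hr x' := ⟨⟨x, hx⟩, Fin.ext rfl⟩
      have hY : A * A⁻¹ = 1 := mul_nonsing_inv A hA
      calc M (Fin.castLE hr x') y = T x' y := rfl
        _ = ((A * A⁻¹) * T) x' y := by rw [hY, Matrix.one_mul]
        _ = ((L * A⁻¹) * T) (Fin.castLE hr x') y := by
            simp only [mul_apply, hAdef, hL, hT, submatrix_apply, id_eq]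
    · by_cases hy : (y : ℕ) < r
      · obtain ⟨y', rfl⟩ : ∃ y', y = Fin.castLE hr' y' := ⟨⟨y, hy⟩, Fin.ext rfl⟩
        have hX : (L * A⁻¹) * A = L := by
          rw [Matrix.mul_assoc, nonsing_inv_mul A hA, Matrix.mul_one]
        calc M x (Fin.castLE hr' y') = L x y' := rfl
          _ = ((L * A⁻¹) * A) x y' := by rw [hX]
          _ = ((L * A⁻¹) * T) x (Fin.castLE hr' y') := by
              simp only [mul_apply, hAdef, hL, hT, submatrix_apply, id_eq]
      · have h0 := hcon x y (le_of_not_gt hx) (le_of_not_gt hy)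
        rw [isUnit_iff_ne_zero, not_not,
          det_snoc_aux n m r hr hr' M hA x y, mul_eq_zero] at h0
        rcases h0 with h0 | h0
        · exact absurd h0 hdetA
        · have := sub_eq_zero.mp h0
          simpa [hAdef, hL, hT] using this
  have : M.rank ≤ r := by
    calc M.rank = ((L * A⁻¹) * T).rank := by rw [← key]
      _ ≤ T.rank := rank_mul_le_right _ _
      _ ≤ Fintype.card (Fin r) := T.rank_le_card_height
      _ = r := Fintype.card_fin r
  omega
end

section
/- Let n ≥ 3 and for i ∈ [n] let |ψ_i⟩ = |0^{i-1} 1 0^{n-i}⟩ be the computational basis state of Hamming weight 1 with the 1 in position i. Let ρ = (1/n) Σ_{i=1}^n |ψ_i⟩⟨ψ_i|. Then every 2-qubit reduced density matrix of ρ equals ρ_{ij} = ((n−2)/n)|00⟩⟨00| + (1/n)|01⟩⟨01| + (1/n)|10⟩⟨10|, and there is no pure state |φ⟩ on n qubits whose 2-qubit reduced density matrices on all pairs {i,j} equal ρ_{ij}. -/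
open Matrix BigOperators

variable {n : ℕ}

/-- The Hamming-weight-one computational basis vector `|0^{i-1} 1 0^{n-i}⟩`. -/
noncomputable def eVec (n : ℕ) (i : Fin n) : (Fin n → Fin 2) → ℂ :=
  fun z => if z = (fun k => if k = i then 1 else 0) then 1 else 0

/-- The two-qubit reduced density matrix of an `n`-qubit operator `M` on qubits `i, j`:
entry `((p₁,p₂),(q₁,q₂))` is `Σ_z [z i = p₁ ∧ z j = p₂] · M z (z[i ↦ q₁][j ↦ q₂])`. -/
noncomputable def rdm2 (M : Matrix (Fin n → Fin 2) (Fin n → Fin 2) ℂ) (i j : Fin n) :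
    Matrix (Fin 2 × Fin 2) (Fin 2 × Fin 2) ℂ :=
  Matrix.of fun p q => ∑ z : Fin n → Fin 2,
    if z i = p.1 ∧ z j = p.2 then
      M z (Function.update (Function.update z i q.1) j q.2) else 0

/-- The claimed common two-qubit marginal
`((n−2)/n)|00⟩⟨00| + (1/n)|01⟩⟨01| + (1/n)|10⟩⟨10|`. -/
noncomputable def targetRDM (n : ℕ) : Matrix (Fin 2 × Fin 2) (Fin 2 × Fin 2) ℂ :=
  Matrix.of fun p q =>
    if p = q then
      (if p = ((0 : Fin 2), (0 : Fin 2)) then ((n : ℂ) - 2) / n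
       else if p = ((0 : Fin 2), (1 : Fin 2)) ∨ p = ((1 : Fin 2), (0 : Fin 2)) then 1 / (n : ℂ)
       else 0)
    else 0

noncomputable def dvec (n : ℕ) (i : Fin n) : Fin n → Fin 2 := fun k => if k = i then 1 else 0

lemma upd2_eq_iff {n : ℕ} {z : Fin n → Fin 2} {i j : Fin n} (hij : i ≠ j) (a b : Fin 2) :
    Function.update (Function.update z i a) j b = z ↔ a = z i ∧ b = z j := by
  constructor
  · intro h
    constructor
    · have := congrFun h i
      rwa [Function.update_of_ne hij, Function.update_self] at this
    · have := congrFun h j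
      rwa [Function.update_self] at this
  · rintro ⟨ha, hb⟩
    subst ha hb
    rw [Function.update_eq_self, Function.update_eq_self]

lemma vmv_apply {n : ℕ} (k : Fin n) (z w : Fin n → Fin 2) :
    Matrix.vecMulVec (eVec n k) (star (eVec n k)) z w
      = if z = dvec n k ∧ w = dvec n k then 1 else 0 := by
  have he : ∀ v, eVec n k v = if v = dvec n k then 1 else 0 := fun _ => rfl
  simp only [Matrix.vecMulVec_apply, Pi.star_apply, he, apply_ite (star : ℂ → ℂ),
    star_one, star_zero]
  split_ifs <;> simp_all

lemma part1 {n : ℕ} (hn : 3 ≤ n) (i j : Fin n) (hij : i ≠ j) :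
    rdm2 ((1 / (n : ℂ)) • ∑ k : Fin n, Matrix.vecMulVec (eVec n k) (star (eVec n k))) i j
      = targetRDM n := by
  have hn0 : (n : ℂ) ≠ 0 := Nat.cast_ne_zero.mpr (by omega)
  ext p q
  rw [rdm2]
  simp only [Matrix.of_apply]
  have step1 : ∀ z : Fin n → Fin 2,
      (if z i = p.1 ∧ z j = p.2 then
        ((1 / (n : ℂ)) • ∑ k : Fin n, Matrix.vecMulVec (eVec n k) (star (eVec n k))) z
          (Function.update (Function.update z i q.1) j q.2) else 0)
      = ∑ k : Fin n, (if (z i = p.1 ∧ z j = p.2) ∧ z = dvec n k ∧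
          Function.update (Function.update z i q.1) j q.2 = dvec n k then (1 / (n : ℂ)) else 0) := by
    intro z
    rw [Matrix.smul_apply, Matrix.sum_apply, smul_eq_mul, Finset.mul_sum]
    split_ifs with hc
    · refine Finset.sum_congr rfl fun k _ => ?_
      rw [vmv_apply, mul_ite, mul_one, mul_zero]
      exact if_congr (by tauto) rfl rfl
    · symm; apply Finset.sum_eq_zero; intro k _; rw [if_neg]; tauto
  rw [Finset.sum_congr rfl fun z _ => step1 z, Finset.sum_comm]
  have step2 : ∀ k : Fin n,
      (∑ z : Fin n → Fin 2, if (z i = p.1 ∧ z j = p.2) ∧ z = dvec n k ∧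
          Function.update (Function.update z i q.1) j q.2 = dvec n k then (1 / (n : ℂ)) else 0)
      = if (dvec n k i = p.1 ∧ dvec n k j = p.2) ∧ q.1 = p.1 ∧ q.2 = p.2
          then (1 / (n : ℂ)) else 0 := by
    intro k
    rw [Finset.sum_eq_single (dvec n k)]
    · apply if_congr _ rfl rfl
      rw [upd2_eq_iff hij]
      constructor
      · rintro ⟨⟨h1, h2⟩, -, h3, h4⟩; exact ⟨⟨h1, h2⟩, h3.trans h1, h4.trans h2⟩
      · rintro ⟨⟨h1, h2⟩, h3, h4⟩; exact ⟨⟨h1, h2⟩, rfl, h3.trans h1.symm, h4.trans h2.symm⟩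
    · intro z _ hz; rw [if_neg]; rintro ⟨-, h, -⟩; exact hz h
    · intro h; exact absurd (Finset.mem_univ _) h
  rw [Finset.sum_congr rfl fun k _ => step2 k]
  have hd : ∀ k m : Fin n, dvec n k m = if m = k then 1 else 0 := fun _ _ => rfl
  have f2 : ∀ a : Fin 2, a = 0 ∨ a = 1 := by decide
  obtain ⟨p1, p2⟩ := p
  obtain ⟨q1, q2⟩ := q
  rcases f2 p1 with rfl | rfl <;> rcases f2 p2 with rfl | rfl <;>
    rcases f2 q1 with rfl | rfl <;> rcases f2 q2 with rfl | rfl <;>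
      simp only [hd, targetRDM, Matrix.of_apply, Prod.mk.injEq] <;> norm_num
  · have hmem : ∀ k : Fin n, (¬i = k ∧ ¬j = k) ↔ k ∈ ({i, j} : Finset (Fin n))ᶜ := by
      intro k
      simp only [Finset.mem_compl, Finset.mem_insert, Finset.mem_singleton, not_or]
      exact and_congr ⟨fun h h' => h h'.symm, fun h h' => h h'.symm⟩
        ⟨fun h h' => h h'.symm, fun h h' => h h'.symm⟩
    rw [Finset.sum_congr rfl fun k _ => if_congr (hmem k) rfl rfl,
      Finset.sum_ite_mem, Finset.univ_inter, Finset.sum_const, Finset.card_compl]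
    have hcard : ({i, j} : Finset (Fin n)).card = 2 := by
      rw [Finset.card_insert_of_notMem (by simpa using hij), Finset.card_singleton]
    rw [hcard, Fintype.card_fin, nsmul_eq_mul, Nat.cast_sub (by omega)]
    push_cast
    rw [div_eq_mul_inv]
  · rw [Finset.sum_congr rfl fun k _ =>
      if_congr ⟨fun h => h.2.symm, fun h => ⟨by rw [h]; exact fun h' => hij h', h.symm⟩⟩ rfl rfl,
      Finset.sum_ite_eq' Finset.univ j fun _ => ((n:ℂ))⁻¹, if_pos (Finset.mem_univ j)]
  · rw [Finset.sum_congr rfl fun k _ =>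
      if_congr ⟨fun h => h.1.symm, fun h => ⟨h.symm, by rw [h]; exact fun h' => hij h'.symm⟩⟩ rfl rfl,
      Finset.sum_ite_eq' Finset.univ i fun _ => ((n:ℂ))⁻¹, if_pos (Finset.mem_univ i)]
  · exact Finset.sum_eq_zero fun k _ => if_neg (by rintro ⟨rfl, rfl⟩; exact hij rfl)

lemma part2 {n : ℕ} (hn : 3 ≤ n) (φ : (Fin n → Fin 2) → ℂ)
    (hr : ∀ i j : Fin n, i ≠ j → rdm2 (Matrix.vecMulVec φ (star φ)) i j = targetRDM n) :
    False := by
  have hn0 : (n : ℂ) ≠ 0 := Nat.cast_ne_zero.mpr (by omega)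
  -- Step A : any string with two 1s is outside the support
  have hA : ∀ i j : Fin n, i ≠ j → ∀ z : Fin n → Fin 2, z i = 1 → z j = 1 → φ z = 0 := by
    intro i j hij z hzi hzj
    have h := congrFun (congrFun (hr i j hij) ((1 : Fin 2), (1 : Fin 2))) ((1 : Fin 2), (1 : Fin 2))
    rw [rdm2] at h
    simp only [Matrix.of_apply] at h
    have hRHS : targetRDM n ((1 : Fin 2), (1 : Fin 2)) ((1 : Fin 2), (1 : Fin 2)) = 0 := by
      norm_num [targetRDM, Prod.ext_iff]
    have key : ∀ w : Fin n → Fin 2,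
        (if w i = (1 : Fin 2) ∧ w j = (1 : Fin 2) then
          Matrix.vecMulVec φ (star φ) w (Function.update (Function.update w i 1) j 1) else 0)
        = ((if w i = (1 : Fin 2) ∧ w j = (1 : Fin 2) then Complex.normSq (φ w) else 0 : ℝ) : ℂ) := by
      intro w
      split_ifs with hc
      · rw [(upd2_eq_iff hij 1 1).mpr ⟨hc.1.symm, hc.2.symm⟩, Matrix.vecMulVec_apply,
          Pi.star_apply, Complex.star_def, Complex.mul_conj]
      · simp
    rw [Finset.sum_congr rfl fun w _ => key w, ← Complex.ofReal_sum, hRHS,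
      Complex.ofReal_eq_zero] at h
    have hz := (Finset.sum_eq_zero_iff_of_nonneg (fun w _ => by split_ifs; exacts [Complex.normSq_nonneg _, le_rfl])).mp h z
      (Finset.mem_univ z)
    rw [if_pos ⟨hzi, hzj⟩] at hz
    exact Complex.normSq_eq_zero.mp hz
  -- support facts
  have hsupp : ∀ i : Fin n, ∀ z : Fin n → Fin 2, z i = 1 → z ≠ dvec n i → φ z = 0 := by
    intro i z hzi hzne
    obtain ⟨k, hk⟩ := Function.ne_iff.mp hzne
    have hki : k ≠ i := by
      rintro rfl
      exact hk (by rw [hzi]; simp [dvec])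
    have hzk : z k = 1 := by
      have h0 : dvec n i k = 0 := by simp [dvec, hki]
      rw [h0] at hk
      omega
    exact hA i k (Ne.symm hki) z hzi hzk
  -- Step B : φ (dvec n i) ≠ 0 for all i
  have hB : ∀ i : Fin n, φ (dvec n i) ≠ 0 := by
    intro i
    obtain ⟨j, hji⟩ := Fintype.exists_ne_of_one_lt_card (by simp; omega) i
    have hij : i ≠ j := Ne.symm hji
    have h := congrFun (congrFun (hr i j hij) ((1 : Fin 2), (0 : Fin 2))) ((1 : Fin 2), (0 : Fin 2))
    rw [rdm2] at h
    simp only [Matrix.of_apply] at h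
    have hRHS : targetRDM n ((1 : Fin 2), (0 : Fin 2)) ((1 : Fin 2), (0 : Fin 2)) = 1 / n := by
      simp [targetRDM]
    rw [hRHS] at h
    rw [Finset.sum_eq_single (dvec n i)] at h
    · have hcond : dvec n i i = (1 : Fin 2) ∧ dvec n i j = (0 : Fin 2) := by
        constructor <;> simp [dvec, Ne.symm hij]
      rw [if_pos hcond,
        (upd2_eq_iff hij 1 0).mpr ⟨hcond.1.symm, hcond.2.symm⟩, Matrix.vecMulVec_apply,
        Pi.star_apply, Complex.star_def, Complex.mul_conj] at h
      intro habs
      rw [habs, map_zero, Complex.ofReal_zero] at h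
      exact one_div_ne_zero hn0 h.symm
    · intro z _ hzne
      split_ifs with hc
      · rw [Matrix.vecMulVec_apply, hsupp i z hc.1 hzne, zero_mul]
      · rfl
    · intro habs; exact absurd (Finset.mem_univ _) habs
  -- Step C : contradiction from an off-diagonal entry
  have h01 : (⟨0, by omega⟩ : Fin n) ≠ ⟨1, by omega⟩ := by
    exact Fin.ne_of_val_ne (by norm_num)
  set i₀ : Fin n := ⟨0, by omega⟩
  set j₀ : Fin n := ⟨1, by omega⟩
  have h := congrFun (congrFun (hr i₀ j₀ h01) ((1 : Fin 2), (0 : Fin 2))) ((0 : Fin 2), (1 : Fin 2))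
  rw [rdm2] at h
  simp only [Matrix.of_apply] at h
  have hRHS : targetRDM n ((1 : Fin 2), (0 : Fin 2)) ((0 : Fin 2), (1 : Fin 2)) = 0 := by
    simp [targetRDM]
  rw [hRHS] at h
  rw [Finset.sum_eq_single (dvec n i₀)] at h
  · have hcond : dvec n i₀ i₀ = (1 : Fin 2) ∧ dvec n i₀ j₀ = (0 : Fin 2) := by
      constructor <;> simp [dvec, Ne.symm h01]
    rw [if_pos hcond] at h
    have hupd : Function.update (Function.update (dvec n i₀) i₀ 0) j₀ 1 = dvec n j₀ := by
      funext k
      by_cases hkj : k = j₀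
      · subst hkj; simp [dvec]
      · rw [Function.update_of_ne hkj]
        by_cases hki : k = i₀
        · subst hki; simp [dvec, h01]
        · rw [Function.update_of_ne hki]; simp [dvec, hki, hkj]
    rw [hupd, Matrix.vecMulVec_apply, Pi.star_apply] at h
    rcases mul_eq_zero.mp h with h' | h'
    · exact hB i₀ h'
    · exact hB j₀ (star_eq_zero.mp h')
  · intro z _ hzne
    split_ifs with hc
    · rw [Matrix.vecMulVec_apply, hsupp i₀ z hc.1 hzne, zero_mul]
    · rfl
  · intro habs; exact absurd (Finset.mem_univ _) habs

/-- For `ρ = (1/n) Σ_i |ψ_i⟩⟨ψ_i|` (with `|ψ_i⟩` the weight-one basis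
states), all two-qubit reduced density matrices of `ρ` equal
`((n−2)/n)|00⟩⟨00| + (1/n)|01⟩⟨01| + (1/n)|10⟩⟨10|`, while no *pure* `n`-qubit state has
all of its two-qubit reduced density matrices equal to this. -/
theorem mixed_consistent_but_no_pure (n : ℕ) (hn : 3 ≤ n) :
    (∀ i j : Fin n, i ≠ j →
        rdm2 ((1 / (n : ℂ)) • ∑ i : Fin n, Matrix.vecMulVec (eVec n i) (star (eVec n i))) i j
          = targetRDM n) ∧
    ¬ ∃ φ : (Fin n → Fin 2) → ℂ,
        (∑ z : Fin n → Fin 2, ‖φ z‖ ^ 2 = 1) ∧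
        ∀ i j : Fin n, i ≠ j →
          rdm2 (Matrix.vecMulVec φ (star φ)) i j = targetRDM n :=
  ⟨fun i j hij => part1 hn i j hij, fun ⟨φ, _, hrdm⟩ => part2 hn φ hrdm⟩
end

section
/- The only real solutions (a₀,b₀,a₁,b₁,a₂,b₂) ∈ ℝ⁶ of the system: a₀²+b₀²+a₁²+b₁²+a₂²+b₂² = 1; a₀+a₁+a₂ = 1; b₀+b₁+b₂ = 0; (a₀+a₁−a₂)² + (b₀+b₁−b₂)² = 1; (a₀−b₁−b₂)² + (b₀+a₁+a₂)² = 1; (a₀+a₁−b₂)² + (b₀+b₁+a₂)² = 1 are exactly the three points with (β₀,β₁,β₂) ∈ {(1,0,0),(0,1,0),(0,0,1)} where β_j = a_j + i·b_j; that is, (a₀,b₀,a₁,b₁,a₂,b₂) ∈ {(1,0,0,0,0,0),(0,0,1,0,0,0),(0,0,0,0,1,0)}. -/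
/-- The real solutions of the six-equation system are exactly the three
points corresponding to `(β₀,β₁,β₂) ∈ {(1,0,0),(0,1,0),(0,0,1)}` where `β_j = a_j + i b_j`. -/
theorem qutrit_basis_system (a0 b0 a1 b1 a2 b2 : ℝ) :
    (a0^2 + b0^2 + a1^2 + b1^2 + a2^2 + b2^2 = 1 ∧
     a0 + a1 + a2 = 1 ∧
     b0 + b1 + b2 = 0 ∧
     (a0 + a1 - a2)^2 + (b0 + b1 - b2)^2 = 1 ∧
     (a0 - b1 - b2)^2 + (b0 + a1 + a2)^2 = 1 ∧
     (a0 + a1 - b2)^2 + (b0 + b1 + a2)^2 = 1) ↔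
    ((a0, b0, a1, b1, a2, b2) = ((1:ℝ), (0:ℝ), (0:ℝ), (0:ℝ), (0:ℝ), (0:ℝ)) ∨
     (a0, b0, a1, b1, a2, b2) = ((0:ℝ), (0:ℝ), (1:ℝ), (0:ℝ), (0:ℝ), (0:ℝ)) ∨
     (a0, b0, a1, b1, a2, b2) = ((0:ℝ), (0:ℝ), (0:ℝ), (0:ℝ), (1:ℝ), (0:ℝ))) := by
  constructor
  · rintro ⟨h1, h2, h3, h4, h5, h6⟩
    have ha0 : a0 = 1 - a1 - a2 := by linarith
    subst ha0
    have hb0 : b0 = -b1 - b2 := by linarith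
    subst hb0
    have e1 : a2^2 + b2^2 = a2 := by linear_combination h4/4
    have e2 : a2^2 + b2^2 = a2 + b2 := by linear_combination h6/2
    have hb2 : b2 = 0 := by linarith
    subst hb2
    have e5 : (a1 + a2)^2 + b1^2 = a1 + a2 + b1 := by linear_combination h5/2
    have ha2 : a2 * (a2 - 1) = 0 := by linear_combination e1
    rcases mul_eq_zero.mp ha2 with h | h
    · subst h
      have e8 : a1^2 + b1^2 = a1 := by linear_combination h1/2
      have hb1 : b1 = 0 := by linarith [e5, e8]
      subst hb1
      have ha1 : a1 * (a1 - 1) = 0 := by linear_combination e8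
      rcases mul_eq_zero.mp ha1 with h | h
      · subst h; left; norm_num
      · have : a1 = 1 := by linarith
        subst this; right; left; norm_num
    · have ha2' : a2 = 1 := by linarith
      subst ha2'
      have ha1 : a1 = 0 := by nlinarith [sq_nonneg a1, sq_nonneg b1]
      have hb1 : b1 = 0 := by nlinarith [sq_nonneg a1, sq_nonneg b1]
      subst ha1; subst hb1
      right; right; norm_num
  · rintro (h | h | h) <;> simp only [Prod.mk.injEq] at h <;>
      obtain ⟨rfl, rfl, rfl, rfl, rfl, rfl⟩ := h <;> norm_num
end
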